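/- arXiv:quant-ph/0207090 — 5 statements merged into one kernel-verified Lean document; each statement's English description precedes it below -/
import Mathlib

section
/- Let |φ⟩ and |ψ⟩ be unit vectors in ℂ²⊗H for a finite-dimensional Hilbert space H, and let I, X, Y, Z denote the Pauli operators acting on the first qubit (tensored with identity on H). Then ∑_{U∈{I,X,Y,Z}} |⟨φ|U|ψ⟩|² ≤ 2. -/
/-- Inner product ⟨φ|ψ⟩ (conjugate-linear in the first argument). -/
noncomputable def ip {α : Type*} [Fintype α] (φ ψ : α → ℂ) : ℂ :=
  ∑ x, (starRingEnd ℂ) (φ x) * ψ x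

/-- Entries of the Pauli matrices: `pmat 0` = I, `pmat 1` = X, `pmat 2` = Y, `pmat 3` = Z. -/
def pmat (u : Fin 4) (a b : Fin 2) : ℂ :=
  if u = 0 then (if a = b then 1 else 0)
  else if u = 1 then (if a = b then 0 else 1)
  else if u = 2 then
    (if a = 0 ∧ b = 1 then Complex.I else if a = 1 ∧ b = 0 then -Complex.I else 0)
  else (if a = b then (if a = 0 then 1 else -1) else 0)

/-- The Pauli operator `U ⊗ id` acting on the first qubit of ℂ²⊗H. -/
noncomputable def papply {H : Type*} (u : Fin 4) (ψ : Fin 2 × H → ℂ) : Fin 2 × H → ℂ :=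
  fun p => ∑ a : Fin 2, pmat u p.1 a * ψ (a, p.2)

/-- Cauchy–Schwarz for `ip`. -/
lemma ip_cs {m : ℕ} (x y : Fin m → ℂ) :
    Complex.normSq (ip x y) ≤ (∑ h, Complex.normSq (x h)) * (∑ h, Complex.normSq (y h)) := by
  have h1 : ‖ip x y‖ ≤ ∑ h : Fin m, ‖x h‖ * ‖y h‖ := by
    refine (norm_sum_le _ _).trans (le_of_eq (Finset.sum_congr rfl fun h _ => ?_))
    simp
  have h2 := Finset.sum_mul_sq_le_sq_mul_sq Finset.univ
    (fun h : Fin m => ‖x h‖) (fun h => ‖y h‖)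
  calc Complex.normSq (ip x y) = ‖ip x y‖ ^ 2 := (Complex.sq_norm _).symm
    _ ≤ (∑ h : Fin m, ‖x h‖ * ‖y h‖) ^ 2 := by
        apply pow_le_pow_left₀ (norm_nonneg _) h1
    _ ≤ (∑ h : Fin m, ‖x h‖ ^ 2) * (∑ h : Fin m, ‖y h‖ ^ 2) := h2
    _ = _ := by simp [Complex.sq_norm]

/-- A unit vector has squared norms summing to 1. -/
lemma norm_one_real {m : ℕ} (φ : Fin 2 × Fin m → ℂ) (hφ : ip φ φ = 1) :
    ∑ b : Fin 2, ∑ h : Fin m, Complex.normSq (φ (b, h)) = 1 := by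
  have : ((∑ b : Fin 2, ∑ h : Fin m, Complex.normSq (φ (b, h)) : ℝ) : ℂ) = 1 := by
    rw [← hφ]
    simp only [ip, Fintype.sum_prod_type]
    push_cast
    refine Finset.sum_congr rfl fun b _ => Finset.sum_congr rfl fun h _ => ?_
    rw [Complex.normSq_eq_conj_mul_self]
  exact_mod_cast this

/-- For unit vectors |φ⟩, |ψ⟩ in ℂ²⊗H,
∑_{U∈{I,X,Y,Z}} |⟨φ|U|ψ⟩|² ≤ 2, the Paulis acting on the first qubit. -/
theorem sum_pauli_overlap_sq_le_two {m : ℕ} (φ ψ : Fin 2 × Fin m → ℂ)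
    (hφ : ip φ φ = 1) (hψ : ip ψ ψ = 1) :
    ∑ u : Fin 4, Complex.normSq (ip φ (papply u ψ)) ≤ 2 := by
  set ρ : Fin 2 → Fin 2 → ℂ :=
    fun a b => ip (fun h => φ (b, h)) (fun h => ψ (a, h)) with hρ
  have key : ∀ u, ip φ (papply u ψ) = ∑ b : Fin 2, ∑ a : Fin 2, pmat u b a * ρ a b := by
    intro u
    simp only [ip, papply, hρ, Fintype.sum_prod_type, Finset.mul_sum]
    refine Finset.sum_congr rfl fun b _ => ?_
    rw [Finset.sum_comm]
    refine Finset.sum_congr rfl fun a _ => ?_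
    exact Finset.sum_congr rfl fun h _ => by ring
  have key2 : ∑ u : Fin 4, Complex.normSq (ip φ (papply u ψ)) =
      2 * ∑ a : Fin 2, ∑ b : Fin 2, Complex.normSq (ρ a b) := by
    simp only [key, Fin.sum_univ_four, Fin.sum_univ_two]
    norm_num [pmat, (by decide : ¬(3:Fin 4)=0), (by decide : ¬(3:Fin 4)=1),
      (by decide : ¬(3:Fin 4)=2), (by decide : ¬(2:Fin 4)=0), (by decide : ¬(2:Fin 4)=1),
      (by decide : ¬(1:Fin 4)=0), (by decide : (2:Fin 4)=2), (by decide : (1:Fin 4)=1),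
      Complex.normSq_apply, Complex.add_re, Complex.add_im,
      Complex.mul_re, Complex.mul_im, Complex.I_re, Complex.I_im]
    ring
  rw [key2]
  have hb : ∑ a : Fin 2, ∑ b : Fin 2, Complex.normSq (ρ a b) ≤ 1 := by
    have step : ∀ a b : Fin 2, Complex.normSq (ρ a b) ≤
        (∑ h, Complex.normSq (φ (b, h))) * (∑ h, Complex.normSq (ψ (a, h))) :=
      fun a b => ip_cs _ _
    calc ∑ a : Fin 2, ∑ b : Fin 2, Complex.normSq (ρ a b)
        ≤ ∑ a : Fin 2, ∑ b : Fin 2,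
            (∑ h, Complex.normSq (φ (b, h))) * (∑ h, Complex.normSq (ψ (a, h))) := by
          exact Finset.sum_le_sum fun a _ => Finset.sum_le_sum fun b _ => step a b
      _ = (∑ b : Fin 2, ∑ h, Complex.normSq (φ (b, h))) *
            (∑ a : Fin 2, ∑ h, Complex.normSq (ψ (a, h))) := by
          rw [Finset.sum_comm]
          rw [Finset.sum_mul_sum]
      _ = 1 := by rw [norm_one_real φ hφ, norm_one_real ψ hψ, one_mul]
  linarith
end

section
/- For any unit vector |φ⟩ in ℂ²⊗H, ∑_{U∈{I,X,Y,Z}} |⟨φ|U|φ⟩|² ≤ 2, where the Pauli operators act on the first qubit. -/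
/-! Write `φ = |0⟩ ⊗ φ₀ + |1⟩ ⊗ φ₁`. The four Pauli expectations are `1`, `2 Re ⟪φ₀, φ₁⟫`,
`-2 Im ⟪φ₀, φ₁⟫` and `‖φ₀‖² - ‖φ₁‖²`, so the sum of their squares is
`1 + 4 |⟪φ₀, φ₁⟫|² + (‖φ₀‖² - ‖φ₁‖²)²`. Cauchy–Schwarz bounds this by
`1 + 4 ‖φ₀‖² ‖φ₁‖² + (‖φ₀‖² - ‖φ₁‖²)² = 1 + (‖φ₀‖² + ‖φ₁‖²)² = 2`. -/

open scoped InnerProductSpace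

section

variable {α : Type*} [Fintype α]

noncomputable def component (φ : Fin 2 × α → ℂ) (i : Fin 2) : EuclideanSpace ℂ α :=
  WithLp.toLp 2 fun h => φ (i, h)

theorem ip_eq_inner_component_add (φ ψ : Fin 2 × α → ℂ) :
    ip φ ψ = ⟪component φ 0, component ψ 0⟫_ℂ + ⟪component φ 1, component ψ 1⟫_ℂ := by
  simp only [ip, component, PiLp.inner_apply, RCLike.inner_apply, Fintype.sum_prod_type,
    Fin.sum_univ_two, ← Finset.sum_add_distrib, mul_comm]

theorem ip_self_eq_norm_component_sq_add_sq (φ : Fin 2 × α → ℂ) :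
    ip φ φ = (‖component φ 0‖ ^ 2 + ‖component φ 1‖ ^ 2 : ℝ) := by
  rw [ip_eq_inner_component_add, inner_self_eq_norm_sq_to_K,
    inner_self_eq_norm_sq_to_K]
  push_cast
  rfl

theorem ip_papply_zero (φ : Fin 2 × α → ℂ) : ip φ (papply 0 φ) = ip φ φ := by
  congr 1
  funext p
  simp [papply, pmat]

theorem ip_papply_one (φ : Fin 2 × α → ℂ) :
    ip φ (papply 1 φ) = (2 * (⟪component φ 0, component φ 1⟫_ℂ).re : ℝ) := by
  have h0 : component (papply 1 φ) 0 = component φ 1 := by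
    ext h; simp [component, papply, pmat, Fin.sum_univ_two]
  have h1 : component (papply 1 φ) 1 = component φ 0 := by
    ext h; simp [component, papply, pmat, Fin.sum_univ_two]
  rw [ip_eq_inner_component_add, h0, h1, ← inner_conj_symm (component φ 1),
    Complex.add_conj]

theorem ip_papply_two (φ : Fin 2 × α → ℂ) :
    ip φ (papply 2 φ) = (-2 * (⟪component φ 0, component φ 1⟫_ℂ).im : ℝ) := by
  have h0 : component (papply 2 φ) 0 = Complex.I • component φ 1 := by
    ext h; simp [component, papply, pmat]
  have h1 : component (papply 2 φ) 1 = -Complex.I • component φ 0 := by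
    ext h; simp [component, papply, pmat]
  rw [ip_eq_inner_component_add, h0, h1, inner_smul_right, inner_smul_right,
    ← inner_conj_symm (component φ 1), neg_mul, ← sub_eq_add_neg, ← mul_sub, Complex.sub_conj]
  push_cast
  ring_nf
  simp [Complex.I_sq]

theorem ip_papply_three (φ : Fin 2 × α → ℂ) :
    ip φ (papply 3 φ) = (‖component φ 0‖ ^ 2 - ‖component φ 1‖ ^ 2 : ℝ) := by
  have h0 : component (papply 3 φ) 0 = component φ 0 := by
    ext h; simp [component, papply, pmat]
  have h1 : component (papply 3 φ) 1 = -component φ 1 := by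
    ext h; simp [component, papply, pmat]
  rw [ip_eq_inner_component_add, h0, h1, inner_neg_right,
    inner_self_eq_norm_sq_to_K, inner_self_eq_norm_sq_to_K]
  push_cast
  rfl

end

/-- For any unit vector |φ⟩ in ℂ²⊗H,
∑_{U∈{I,X,Y,Z}} |⟨φ|U|φ⟩|² ≤ 2, the Paulis acting on the first qubit. -/
theorem sum_pauli_self_overlap_sq_le_two {m : ℕ} (φ : Fin 2 × Fin m → ℂ)
    (hφ : ip φ φ = 1) :
    ∑ u : Fin 4, Complex.normSq (ip φ (papply u φ)) ≤ 2 := by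
  set a := ‖component φ 0‖
  set b := ‖component φ 1‖
  set c := ⟪component φ 0, component φ 1⟫_ℂ
  have hab : a ^ 2 + b ^ 2 = 1 := by
    exact_mod_cast (ip_self_eq_norm_component_sq_add_sq φ).symm.trans hφ
  have hc : ‖c‖ ≤ a * b := norm_inner_le_norm _ _
  have hc_sq : c.re ^ 2 + c.im ^ 2 = ‖c‖ ^ 2 := by
    rw [← Complex.normSq_eq_norm_sq, Complex.normSq_apply]; ring
  rw [Fin.sum_univ_four, ip_papply_zero, hφ, ip_papply_one, ip_papply_two, ip_papply_three]
  simp only [Complex.normSq_one, Complex.normSq_ofReal]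
  nlinarith [norm_nonneg c, mul_nonneg (norm_nonneg (component φ 0)) (norm_nonneg (component φ 1))]
end

section
/- For n-bit strings s, ∑_{y∈{0,1}ⁿ} C(n−|y|, n−r)·(−1)^{s·y} = 2^r · C(n−|s|, r), where |y| is the Hamming weight of y and s·y = ∑ⱼ s[j]y[j] mod 2. -/
/-- Hamming weight of a bit string. -/
def wt {n : ℕ} (y : Fin n → Bool) : ℕ :=
  (Finset.univ.filter fun j => y j = true).card

open Finset

lemma walsh_inner_sum {α : Type*} [DecidableEq α] (S : Finset α) (U : Finset α) :
    ∑ A ∈ U.powerset, (-1 : ℤ) ^ (A ∩ S).card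
      = if U ∩ S = ∅ then (2 : ℤ) ^ U.card else 0 := by
  classical
  induction U using Finset.induction_on with
  | empty => simp
  | @insert a U ha ih =>
    rw [Finset.sum_powerset_insert ha]
    have hsub : ∀ A ∈ U.powerset, a ∉ A := fun A hA =>
      fun h => ha (Finset.mem_powerset.1 hA h)
    by_cases haS : a ∈ S
    · have h1 : ∀ A ∈ U.powerset,
          (-1 : ℤ) ^ ((insert a A) ∩ S).card = -((-1 : ℤ) ^ (A ∩ S).card) := by
        intro A hA
        rw [Finset.insert_inter_of_mem haS, Finset.card_insert_of_notMem
          (fun h => hsub A hA (Finset.mem_inter.1 h).1)]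
        ring
      rw [Finset.sum_congr rfl h1, Finset.sum_neg_distrib, add_neg_cancel]
      have h2 : insert a U ∩ S ≠ ∅ := by
        intro h
        have : a ∈ insert a U ∩ S := Finset.mem_inter.2 ⟨Finset.mem_insert_self _ _, haS⟩
        simp [h] at this
      rw [if_neg h2]
    · have h1 : ∀ A ∈ U.powerset,
          (-1 : ℤ) ^ ((insert a A) ∩ S).card = (-1 : ℤ) ^ (A ∩ S).card := by
        intro A _
        rw [Finset.insert_inter_of_notMem haS]
      rw [Finset.sum_congr rfl h1, ih, Finset.insert_inter_of_notMem haS,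
        Finset.card_insert_of_notMem ha]
      by_cases h : U ∩ S = ∅ <;> simp [h] <;> ring

lemma walsh_key (n r : ℕ) (hr : r ≤ n) (S : Finset (Fin n)) :
    ∑ A ∈ (Finset.univ : Finset (Fin n)).powerset,
        (-1 : ℤ) ^ (S ∩ A).card * ((n - A.card).choose (n - r) : ℤ)
      = 2 ^ r * ((n - S.card).choose r : ℤ) := by
  classical
  have step2 : ∀ A : Finset (Fin n),
      (-1 : ℤ) ^ (S ∩ A).card * ((n - A.card).choose (n - r) : ℤ)
        = ∑ T ∈ (Finset.univ : Finset (Fin n)).powersetCard (n - r),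
            (if A ⊆ Tᶜ then (-1 : ℤ) ^ (S ∩ A).card else 0) := by
    intro A
    have step1 : ((n - A.card).choose (n - r) : ℤ) = ((Aᶜ.powersetCard (n - r)).card : ℤ) := by
      rw [Finset.card_powersetCard, Finset.card_compl, Fintype.card_fin]
    rw [step1]
    have hset : Aᶜ.powersetCard (n - r)
        = ((Finset.univ : Finset (Fin n)).powersetCard (n - r)).filter (fun T => A ⊆ Tᶜ) := by
      ext T
      rw [Finset.mem_filter, Finset.mem_powersetCard, Finset.mem_powersetCard]
      constructor
      · rintro ⟨h1, h2⟩
        exact ⟨⟨Finset.subset_univ _, h2⟩, Finset.subset_compl_comm.mp h1⟩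
      · rintro ⟨⟨_, h2⟩, h3⟩
        exact ⟨Finset.subset_compl_comm.mp h3, h2⟩
    rw [hset, Finset.card_filter, Nat.cast_sum, Finset.mul_sum]
    apply Finset.sum_congr rfl
    intro T _
    by_cases h : A ⊆ Tᶜ <;> simp [h]
  rw [Finset.sum_congr rfl (fun A _ => step2 A), Finset.sum_comm]
  have step3 : ∀ T ∈ (Finset.univ : Finset (Fin n)).powersetCard (n - r),
      (∑ A ∈ (Finset.univ : Finset (Fin n)).powerset,
          (if A ⊆ Tᶜ then (-1 : ℤ) ^ (S ∩ A).card else 0))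
        = if S ⊆ T then (2 : ℤ) ^ r else 0 := by
    intro T hT
    have hTcard : T.card = n - r := (Finset.mem_powersetCard.1 hT).2
    have hfil : ((Finset.univ : Finset (Fin n)).powerset).filter (fun A => A ⊆ Tᶜ)
        = Tᶜ.powerset := by
      ext A
      rw [Finset.mem_filter, Finset.mem_powerset, Finset.mem_powerset]
      exact ⟨fun h => h.2, fun h => ⟨Finset.subset_univ _, h⟩⟩
    rw [← Finset.sum_filter, hfil]
    have hin := walsh_inner_sum S Tᶜ
    have hinter : ∀ A ∈ Tᶜ.powerset,
        (-1 : ℤ) ^ (S ∩ A).card = (-1 : ℤ) ^ (A ∩ S).card := by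
      intro A _; rw [Finset.inter_comm]
    rw [Finset.sum_congr rfl hinter, hin]
    have hcompl : Tᶜ.card = r := by
      rw [Finset.card_compl, Fintype.card_fin, hTcard, Nat.sub_sub_self hr]
    have hcond : (Tᶜ ∩ S = ∅) ↔ S ⊆ T := by
      rw [← Finset.disjoint_iff_inter_eq_empty, disjoint_compl_left_iff]
    rw [hcompl]
    by_cases h : S ⊆ T
    · rw [if_pos (hcond.2 h), if_pos h]
    · rw [if_neg (fun hc => h (hcond.1 hc)), if_neg h]
  rw [Finset.sum_congr rfl step3, Finset.sum_ite, Finset.sum_const, Finset.sum_const_zero,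
    add_zero, nsmul_eq_mul]
  have hcount : (((Finset.univ : Finset (Fin n)).powersetCard (n - r)).filter
      (fun T => S ⊆ T)).card = (n - S.card).choose r := by
    rw [show ((n - S.card).choose r) = (Sᶜ.powersetCard r).card by
      rw [Finset.card_powersetCard, Finset.card_compl, Fintype.card_fin]]
    apply Finset.card_bij' (fun T _ => Tᶜ) (fun W _ => Wᶜ) ?_ ?_
      (fun T _ => compl_compl T) (fun W _ => compl_compl W)
    · intro T hT
      obtain ⟨hmem, hST⟩ := Finset.mem_filter.1 hT
      obtain ⟨_, hcard⟩ := Finset.mem_powersetCard.1 hmem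
      refine Finset.mem_powersetCard.2 ⟨Finset.compl_subset_compl.2 hST, ?_⟩
      rw [Finset.card_compl, Fintype.card_fin, hcard, Nat.sub_sub_self hr]
    · intro W hW
      obtain ⟨hWS, hcard⟩ := Finset.mem_powersetCard.1 hW
      refine Finset.mem_filter.2 ⟨Finset.mem_powersetCard.2 ⟨Finset.subset_univ _, ?_⟩, ?_⟩
      · rw [Finset.card_compl, Fintype.card_fin, hcard]
      · rw [show S ⊆ (fun W _ => Wᶜ) W hW ↔ S ⊆ Wᶜ from Iff.rfl, ← compl_compl S]
        exact Finset.compl_subset_compl.2 hWS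
  rw [hcount, mul_comm]

/-- Bit strings as finsets. -/
def walshEquiv (n : ℕ) : Finset (Fin n) ≃ (Fin n → Bool) where
  toFun A j := decide (j ∈ A)
  invFun y := Finset.univ.filter fun j => y j = true
  left_inv A := by ext j; simp
  right_inv y := by funext j; simp

/-- Walsh-sum identity: for an n-bit string s and 0 ≤ r ≤ n,
∑_{y∈{0,1}ⁿ} (−1)^{s·y} · C(n−|y|, n−r) = 2^r · C(n−|s|, r). -/
theorem walsh_binomial_sum (n r : ℕ) (hr : r ≤ n) (s : Fin n → Bool) :
    ∑ y : Fin n → Bool,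
        (-1 : ℤ) ^ wt (fun j => s j && y j) * ((n - wt y).choose (n - r) : ℤ)
      = 2 ^ r * ((n - wt s).choose r : ℤ) := by
  classical
  set S : Finset (Fin n) := Finset.univ.filter fun j => s j = true with hS
  have hwS : wt s = S.card := rfl
  rw [hwS, ← walsh_key n r hr S]
  refine (Fintype.sum_equiv (walshEquiv n) _ _ ?_).symm
  intro A
  have h1 : wt (walshEquiv n A) = A.card := by
    unfold wt walshEquiv
    congr 1
    ext j; simp
  have h2 : wt (fun j => s j && (walshEquiv n A) j) = (S ∩ A).card := by
    unfold wt walshEquiv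
    congr 1
    ext j
    simp [hS, Finset.mem_inter, Bool.and_eq_true]
  rw [h1, h2]
end

section
/- Fix n, r ≤ n, and n-bit strings a, b with k = |a⊕b|. The number of pairs (c, u), where c ∈ {0,1}ⁿ and u is an extended indicator vector in ({0,1}²∪{*})ⁿ of degree r, such that both (a; a⊕c) and (b; b⊕c) are consistent with u, equals 2^r · C(n−k, r). -/
open scoped Classical

/-- Degree of an extended indicator vector u ∈ ({0,1}²∪{*})ⁿ (entries
`Option (Bool × Bool)`, `none` playing the role of *): the number of non-* entries. -/
noncomputable def degE {n : ℕ} (u : Fin n → Option (Bool × Bool)) : ℕ :=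
  (Finset.univ.filter fun j => (u j).isSome).card

/-- The 2n-bit string with halves l, r is consistent with the extended indicator
vector u: at non-* positions the pair (l j, r j) matches the entry of u, and at
* positions l j = r j. -/
def ConsistentE {n : ℕ} (l r : Fin n → Bool) (u : Fin n → Option (Bool × Bool)) : Prop :=
  ∀ j, (∀ p, u j = some p → l j = p.1 ∧ r j = p.2) ∧ (u j = none → l j = r j)

/-- For n-bit strings a, b with Hamming distance k, the number of pairs (c, u)
with c ∈ {0,1}ⁿ and u an extended indicator vector of degree r such that both
(a; a⊕c) and (b; b⊕c) are consistent with u equals 2^r · C(n−k, r). -/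
theorem count_extended_indicator_pairs (n r : ℕ) (hr : r ≤ n)
    (a b : Fin n → Bool) (k : ℕ)
    (hk : k = (Finset.univ.filter fun j => a j ≠ b j).card) :
    (Finset.univ.filter fun cu : (Fin n → Bool) × (Fin n → Option (Bool × Bool)) =>
        degE cu.2 = r ∧
        ConsistentE a (fun j => xor (a j) (cu.1 j)) cu.2 ∧
        ConsistentE b (fun j => xor (b j) (cu.1 j)) cu.2).card
      = 2 ^ r * (n - k).choose r := by
  classical
  set E : Finset (Fin n) := Finset.univ.filter (fun j => a j = b j) with hE
  have hEcard : E.card = n - k := by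
    have h := Finset.card_filter_add_card_filter_not
      (s := (Finset.univ : Finset (Fin n))) (p := fun j => a j ≠ b j)
    have hE' : E = Finset.univ.filter (fun j => ¬ a j ≠ b j) := by
      ext j; simp [hE, not_not]
    have hn : (Finset.univ : Finset (Fin n)).card = n := by simp
    rw [hE']
    omega
  set Su := (Finset.univ.filter fun cu : (Fin n → Bool) × (Fin n → Option (Bool × Bool)) =>
        degE cu.2 = r ∧
        ConsistentE a (fun j => xor (a j) (cu.1 j)) cu.2 ∧
        ConsistentE b (fun j => xor (b j) (cu.1 j)) cu.2) with hSu
  have hmem : ∀ cu : (Fin n → Bool) × (Fin n → Option (Bool × Bool)), cu ∈ Su ↔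
      degE cu.2 = r ∧
        ConsistentE a (fun j => xor (a j) (cu.1 j)) cu.2 ∧
        ConsistentE b (fun j => xor (b j) (cu.1 j)) cu.2 := by
    intro cu; simp [hSu]
  have hmap : ∀ cu ∈ Su,
      (Finset.univ.filter fun j => (cu.2 j).isSome) ∈ E.powersetCard r := by
    intro cu hcu
    rw [hmem] at hcu
    obtain ⟨hdeg, hca, hcb⟩ := hcu
    rw [Finset.mem_powersetCard]
    constructor
    · intro j hj
      simp only [Finset.mem_filter, Finset.mem_univ, true_and] at hj
      obtain ⟨p, hp⟩ := Option.isSome_iff_exists.mp hj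
      have h1 := (hca j).1 p hp
      have h2 := (hcb j).1 p hp
      simp only [hE, Finset.mem_filter, Finset.mem_univ, true_and]
      rw [h1.1, h2.1]
    · exact hdeg
  rw [Finset.card_eq_sum_card_fiberwise hmap]
  have key : ∀ S ∈ E.powersetCard r,
      (Su.filter fun cu => (Finset.univ.filter fun j => (cu.2 j).isSome) = S).card
        = 2 ^ r := by
    intro S hS
    rw [Finset.mem_powersetCard] at hS
    obtain ⟨hSsub, hScard⟩ := hS
    have hab : ∀ x ∈ S, a x = b x := by
      intro x hx
      have := hSsub hx
      simpa [hE] using this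
    have := Finset.card_bij'
      (s := Su.filter fun cu => (Finset.univ.filter fun j => (cu.2 j).isSome) = S)
      (t := (Finset.univ : Finset (↥S → Bool)))
      (i := fun cu _ => fun j : ↥S => cu.1 j.1)
      (j := fun g _ =>
        (fun x => if hx : x ∈ S then g ⟨x, hx⟩ else false,
         fun x => if hx : x ∈ S then some (a x, xor (a x) (g ⟨x, hx⟩)) else none))
      (by intro cu hcu; exact Finset.mem_univ _)
      (by
        intro g _
        simp only [Finset.mem_filter]
        have hsupp : (Finset.univ.filter fun j =>
            ((fun x => if hx : x ∈ S then some (a x, xor (a x) (g ⟨x, hx⟩)) else none) j).isSome)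
            = S := by
          ext x
          by_cases hx : x ∈ S <;> simp [hx]
        refine ⟨?_, hsupp⟩
        rw [hmem]
        refine ⟨?_, ?_, ?_⟩
        · show degE _ = r
          unfold degE
          rw [hsupp, hScard]
        · intro x
          constructor
          · intro p hp
            by_cases hx : x ∈ S
            · simp only [hx, dif_pos] at hp ⊢
              cases hp
              exact ⟨rfl, rfl⟩
            · simp [hx] at hp
          · intro hnone
            by_cases hx : x ∈ S
            · simp [hx] at hnone
            · simp [hx]
        · intro x
          constructor
          · intro p hp
            by_cases hx : x ∈ S
            · simp only [hx, dif_pos] at hp ⊢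
              cases hp
              exact ⟨(hab x hx).symm, by rw [hab x hx]⟩
            · simp [hx] at hp
          · intro hnone
            by_cases hx : x ∈ S
            · simp [hx] at hnone
            · simp [hx])
      (by
        intro cu hcu
        simp only [Finset.mem_filter] at hcu
        obtain ⟨hcu, hsupp⟩ := hcu
        rw [hmem] at hcu
        obtain ⟨hdeg, hca, hcb⟩ := hcu
        have hnone : ∀ x, x ∉ S → cu.2 x = none := by
          intro x hx
          have : ¬ (cu.2 x).isSome := by
            intro h
            exact hx (hsupp ▸ (by simp [h] : x ∈ Finset.univ.filter fun j => (cu.2 j).isSome))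
          exact Option.not_isSome_iff_eq_none.mp this
        have hcfalse : ∀ x, x ∉ S → cu.1 x = false := by
          intro x hx
          have h := (hca x).2 (hnone x hx)
          cases hax : a x <;> cases hcx : cu.1 x <;> simp_all
        have hsome : ∀ x (hx : x ∈ S), cu.2 x = some (a x, xor (a x) (cu.1 x)) := by
          intro x hx
          have : (cu.2 x).isSome := by
            have : x ∈ Finset.univ.filter fun j => (cu.2 j).isSome := hsupp ▸ hx
            simpa using this
          obtain ⟨p, hp⟩ := Option.isSome_iff_exists.mp this
          obtain ⟨h1, h2⟩ := (hca x).1 p hp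
          rw [hp]
          cases p
          simp_all
        ext x
        · by_cases hx : x ∈ S
          · simp [hx]
          · simp [hx, hcfalse x hx]
        · by_cases hx : x ∈ S
          · simp [hx, hsome x hx]
          · simp [hx, hnone x hx])
      (by
        intro g _
        funext j
        simp [j.2])
    rw [this, Finset.card_univ]
    have : Fintype.card (↥S → Bool) = 2 ^ r := by
      rw [Fintype.card_fun, Fintype.card_bool, Fintype.card_coe, hScard]
    exact this
  rw [Finset.sum_congr rfl key, Finset.sum_const, Finset.card_powersetCard, hEcard,
    smul_eq_mul, mul_comm]
end

section
/- Combining counts: with {|φ_x⟩}_{x∈{0,1}ⁿ} orthonormal in ℂ²⊗H and Paulis on the first qubit, ∑_{a,b∈{0,1}ⁿ} ∑_{U∈{I,X,Y,Z}} |⟨φ_a|U|φ_b⟩|² · 2^r·C(n−|a⊕b|, r) ≤ 2^{n+r+2}·C(n,r)·(1 − r/(2n)). -/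
/-!
Write `s(a, b) = ∑_U |⟨φ_a|U|φ_b⟩|²`. Since the Paulis are unitary, Bessel's inequality bounds
every column sum `∑_a s(a, b)` by 4, so `∑_{a,b} s(a, b) ≤ 2^{n+2}`; on the diagonal,
`∑_U |⟨ψ|U|ψ⟩|² ≤ 2` for a unit vector `ψ`, so `∑_a s(a, a) ≤ 2^{n+1}`. The weight
`2^r C(n - |a ⊕ b|, r)` is at most `2^r C(n-1, r)` off the diagonal and, by Pascal's rule, exceeds it
by `2^r C(n-1, r-1)` on it. The resulting bound `2^{n+r+2} C(n-1, r) + 2^{n+r+1} C(n-1, r-1)` is the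
right-hand side by the absorption identity `r C(n, r) = n C(n-1, r-1)`.
-/

open Finset

section InnerProduct

variable {α : Type*} [Fintype α]

lemma ip_eq_inner (f g : α → ℂ) : ip f g = inner ℂ (WithLp.toLp 2 f) (WithLp.toLp 2 g) := by
  simp [ip, PiLp.inner_apply, RCLike.inner_apply, mul_comm]

lemma norm_toLp_sq (f : α → ℂ) : ‖WithLp.toLp 2 f‖ ^ 2 = ∑ x, Complex.normSq (f x) := by
  simp [EuclideanSpace.norm_sq_eq, Complex.normSq_eq_norm_sq]

lemma ip_self (f : α → ℂ) : ip f f = ((∑ x, Complex.normSq (f x) : ℝ) : ℂ) := by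
  push_cast
  exact sum_congr rfl fun x _ => by rw [mul_comm, Complex.mul_conj]

lemma ip_swap (f g : α → ℂ) : ip g f = starRingEnd ℂ (ip f g) := by
  simp only [ip, map_sum, map_mul, Complex.conj_conj, mul_comm]

lemma normSq_ip_le (f g : α → ℂ) :
    Complex.normSq (ip f g) ≤ (∑ x, Complex.normSq (f x)) * ∑ x, Complex.normSq (g x) := by
  rw [← norm_toLp_sq, ← norm_toLp_sq, ← mul_pow, Complex.normSq_eq_norm_sq, ip_eq_inner]
  gcongr
  exact norm_inner_le_norm _ _

lemma sum_normSq_ip_le_of_orthonormal {ι : Type*} [Fintype ι] [DecidableEq ι] (φ : ι → α → ℂ)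
    (hortho : ∀ x y, ip (φ x) (φ y) = if x = y then 1 else 0) (ψ : α → ℂ) :
    ∑ i, Complex.normSq (ip (φ i) ψ) ≤ ∑ x, Complex.normSq (ψ x) := by
  have hON : Orthonormal ℂ fun i => WithLp.toLp 2 (φ i) := by
    rw [orthonormal_iff_ite]
    intro i j
    rw [← ip_eq_inner, hortho]
  simpa only [← ip_eq_inner, ← Complex.normSq_eq_norm_sq, norm_toLp_sq]
    using hON.sum_inner_products_le (s := univ) (WithLp.toLp 2 ψ)

end InnerProduct

section Pauli

variable {H : Type*} [Fintype H]

lemma sum_normSq_papply (u : Fin 4) (ψ : Fin 2 × H → ℂ) :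
    ∑ p, Complex.normSq (papply u ψ p) = ∑ p, Complex.normSq (ψ p) := by
  simp only [Fintype.sum_prod_type, Fin.sum_univ_two, ← sum_add_distrib]
  refine sum_congr rfl fun k _ => ?_
  fin_cases u <;> simp [papply, pmat, Complex.normSq_mul] <;> ring

lemma ip_papply (u : Fin 4) (ψ χ : Fin 2 × H → ℂ) :
    ip ψ (papply u χ) = ∑ i, ∑ j, pmat u i j * ip (fun k => ψ (i, k)) (fun k => χ (j, k)) := by
  simp only [ip, papply, Fintype.sum_prod_type, mul_sum]
  refine sum_congr rfl fun i _ => ?_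
  rw [sum_comm]
  exact sum_congr rfl fun j _ => sum_congr rfl fun k _ => by ring

/-- With `ψ = (ψ₀, ψ₁)`, the four terms are `(t₀ + t₁)²`, `(t₀ - t₁)²`, `(2 Re c)²` and `(2 Im c)²`,
where `tᵢ = ‖ψᵢ‖²` and `c = ⟨ψ₀|ψ₁⟩`; Cauchy–Schwarz `|c|² ≤ t₀ t₁` bounds their sum. -/
lemma sum_normSq_ip_papply_self_le (ψ : Fin 2 × H → ℂ) :
    ∑ u, Complex.normSq (ip ψ (papply u ψ)) ≤ 2 * (∑ p, Complex.normSq (ψ p)) ^ 2 := by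
  set t₀ := ∑ k, Complex.normSq (ψ (0, k))
  set t₁ := ∑ k, Complex.normSq (ψ (1, k))
  have hsum : ∑ p, Complex.normSq (ψ p) = t₀ + t₁ := by
    rw [Fintype.sum_prod_type, Fin.sum_univ_two]
  have h₀ : ip (fun k => ψ (0, k)) (fun k => ψ (0, k)) = t₀ := ip_self _
  have h₁ : ip (fun k => ψ (1, k)) (fun k => ψ (1, k)) = t₁ := ip_self _
  have h₁₀ := ip_swap (fun k => ψ (0, k)) (fun k => ψ (1, k))
  have hcs : Complex.normSq (ip (fun k => ψ (0, k)) (fun k => ψ (1, k))) ≤ t₀ * t₁ :=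
    normSq_ip_le _ _
  simp only [ip_papply, pmat, Fin.isValue, ite_mul, one_mul, zero_mul, neg_mul, sum_ite_irrel,
    sum_ite_eq, mem_univ, ↓reduceIte, Fin.sum_univ_two, zero_ne_one, and_false, and_true,
    one_ne_zero, h₀, h₁, zero_add, h₁₀, add_zero, Fin.sum_univ_four, Fin.reduceEq, hsum]
  generalize ip (fun k => ψ (0, k)) (fun k => ψ (1, k)) = c at hcs ⊢
  simp only [Complex.normSq_apply, Complex.add_re, Complex.add_im, Complex.mul_re, Complex.mul_im,
    Complex.neg_re, Complex.neg_im, Complex.I_re, Complex.I_im, Complex.conj_re, Complex.conj_im,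
    Complex.ofReal_re, Complex.ofReal_im] at hcs ⊢
  nlinarith

lemma sum_sum_normSq_ip_papply_le_of_orthonormal {ι : Type*} [Fintype ι] [DecidableEq ι]
    (φ : ι → Fin 2 × H → ℂ) (hortho : ∀ x y, ip (φ x) (φ y) = if x = y then 1 else 0)
    (ψ : Fin 2 × H → ℂ) :
    ∑ i, ∑ u, Complex.normSq (ip (φ i) (papply u ψ)) ≤ 4 * ∑ p, Complex.normSq (ψ p) := by
  rw [sum_comm]
  calc ∑ u : Fin 4, ∑ i, Complex.normSq (ip (φ i) (papply u ψ))
      ≤ ∑ u : Fin 4, ∑ p, Complex.normSq (papply u ψ p) :=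
        sum_le_sum fun u _ => sum_normSq_ip_le_of_orthonormal φ hortho _
    _ = 4 * ∑ p, Complex.normSq (ψ p) := by simp [sum_normSq_papply]

end Pauli

namespace Nat

lemma choose_sub_le_add_ite (n d r : ℕ) :
    (n - d).choose r ≤ (n - 1).choose r + if d = 0 then (n - 1).choose (r - 1) else 0 := by
  split_ifs with hd
  · subst hd
    rcases n with _ | n
    · simp
    rcases r with _ | r
    · simp
    simp [choose_succ_succ, add_comm]
  · rw [add_zero]
    exact choose_le_choose r (by omega)

lemma cast_choose_mul_one_sub_div {n r : ℕ} (hn : 0 < n) (hr : 0 < r) :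
    (n.choose r : ℝ) * (1 - r / (2 * n)) = (n - 1).choose r + ((n - 1).choose (r - 1) : ℝ) / 2 := by
  obtain ⟨n, rfl⟩ := exists_eq_add_one.mpr hn
  obtain ⟨r, rfl⟩ := exists_eq_add_one.mpr hr
  have hpascal : ((n + 1).choose (r + 1) : ℝ) = n.choose r + n.choose (r + 1) := by
    exact_mod_cast choose_succ_succ' n r
  have habsorb : ((n + 1 : ℕ) : ℝ) * n.choose r = (n + 1).choose (r + 1) * (r + 1 : ℕ) := by
    exact_mod_cast add_one_mul_choose_eq n r
  simp only [add_tsub_cancel_right]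
  field_simp
  push_cast at habsorb ⊢
  linear_combination 2 * (n + 1 : ℝ) * hpascal + habsorb

end Nat

lemma sum_sum_mul_le_of_le_add_ite {ι : Type*} [Fintype ι] [DecidableEq ι] {s w : ι → ι → ℝ}
    {A B S D : ℝ} (hs : ∀ a b, 0 ≤ s a b) (hw : ∀ a b, w a b ≤ A + if a = b then B else 0)
    (hA : 0 ≤ A) (hB : 0 ≤ B) (hS : ∑ a, ∑ b, s a b ≤ S) (hD : ∑ a, s a a ≤ D) :
    ∑ a, ∑ b, s a b * w a b ≤ S * A + D * B := by
  calc ∑ a, ∑ b, s a b * w a b ≤ ∑ a, ∑ b, s a b * (A + if a = b then B else 0) :=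
        sum_le_sum fun a _ => sum_le_sum fun b _ => mul_le_mul_of_nonneg_left (hw a b) (hs a b)
    _ = (∑ a, ∑ b, s a b) * A + (∑ a, s a a) * B := by
        simp only [mul_add, mul_ite, mul_zero, sum_add_distrib, sum_ite_eq, mem_univ, if_true,
          sum_mul]
    _ ≤ S * A + D * B := by gcongr

lemma cast_choose_sub_hammingDist_le {ι : Type*} [Fintype ι] {β : ι → Type*}
    [∀ i, DecidableEq (β i)] (n r : ℕ) (a b : ∀ i, β i) :
    ((n - hammingDist a b).choose r : ℝ) ≤
      (n - 1).choose r + if a = b then ((n - 1).choose (r - 1) : ℝ) else 0 := by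
  have h := Nat.choose_sub_le_add_ite n (hammingDist a b) r
  simp only [hammingDist_eq_zero] at h
  split_ifs at h ⊢ <;> exact_mod_cast h

/-- For an orthonormal family {|φ_x⟩}_{x∈{0,1}ⁿ} in ℂ²⊗H (Paulis on the first
qubit) and 1 ≤ r ≤ n:
∑_{a,b}∑_U |⟨φ_a|U|φ_b⟩|² · 2^r·C(n−|a⊕b|, r) ≤ 2^{n+r+2}·C(n,r)·(1 − r/(2n)). -/
theorem weighted_orthonormal_pauli_sum {n m : ℕ} (r : ℕ) (hr1 : 1 ≤ r) (hrn : r ≤ n)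
    (φ : (Fin n → Bool) → Fin 2 × Fin m → ℂ)
    (hortho : ∀ x y, ip (φ x) (φ y) = if x = y then 1 else 0) :
    ∑ a : Fin n → Bool, ∑ b : Fin n → Bool, ∑ u : Fin 4,
        Complex.normSq (ip (φ a) (papply u (φ b))) *
          ((2 : ℝ) ^ r *
            ((n - (Finset.univ.filter fun j => a j ≠ b j).card).choose r : ℝ))
      ≤ 2 ^ (n + r + 2) * (n.choose r : ℝ) * (1 - (r : ℝ) / (2 * n)) := by
  have hnorm (x) : ∑ p, Complex.normSq (φ x p) = 1 := by
    exact_mod_cast (ip_self (φ x)).symm.trans ((hortho x x).trans (if_pos rfl))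
  have hall : ∑ a, ∑ b, ∑ u, Complex.normSq (ip (φ a) (papply u (φ b))) ≤ 2 ^ n * 4 := by
    rw [sum_comm]
    calc _ ≤ ∑ _b : Fin n → Bool, (4 : ℝ) := sum_le_sum fun b _ => by
            simpa [hnorm b] using sum_sum_normSq_ip_papply_le_of_orthonormal φ hortho (φ b)
      _ = 2 ^ n * 4 := by simp
  have hdiag : ∑ a, ∑ u, Complex.normSq (ip (φ a) (papply u (φ a))) ≤ 2 ^ n * 2 := by
    calc _ ≤ ∑ _a : Fin n → Bool, (2 : ℝ) := sum_le_sum fun a _ => by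
            simpa [hnorm a] using sum_normSq_ip_papply_self_le (φ a)
      _ = 2 ^ n * 2 := by simp
  have hweight (a b : Fin n → Bool) :
      (2 : ℝ) ^ r * ((n - (Finset.univ.filter fun j => a j ≠ b j).card).choose r : ℝ) ≤
        2 ^ r * (n - 1).choose r + if a = b then 2 ^ r * ((n - 1).choose (r - 1) : ℝ) else 0 := by
    rw [← mul_zero ((2 : ℝ) ^ r), ← mul_ite, ← mul_add]
    exact mul_le_mul_of_nonneg_left (cast_choose_sub_hammingDist_le n r a b) (by positivity)
  simp only [← sum_mul]
  refine (sum_sum_mul_le_of_le_add_ite (fun _ _ => sum_nonneg fun _ _ => Complex.normSq_nonneg _)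
    hweight (by positivity) (by positivity) hall hdiag).trans_eq ?_
  rw [mul_assoc _ (n.choose r : ℝ), Nat.cast_choose_mul_one_sub_div (by omega) hr1]
  ring
end
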